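/- For n ≥ 0 define φ_n(x) = ∫₀ˣ √(2n+1 - t²) dt. If |x|, |y| ≤ T ≤ √(2n+1)/2, then |φ_{n+1}(x) - φ_{n+1}(y) - φ_n(x) + φ_n(y)| ≤ 3 |x - y| / √(2n+1). -/

import Mathlib

/-!
Both differences `φ_{n+1}(x) - φ_{n+1}(y)` and `φ_n(x) - φ_n(y)` are integrals over `[y, x]`, so the
quantity is `∫_y^x (√(r + 2 - t²) - √(r - t²)) dt` with `r = 2n + 1`. For `t² ≤ r / 4` the
integrand is `2 / (√(r + 2 - t²) + √(r - t²)) ≤ 1 / √(r - t²) ≤ 2 / √r`, and integrating over an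
interval of length `|x - y|` gives the bound with constant `2 ≤ 3`.
-/

open MeasureTheory Real

lemma intervalIntegral_sub_sub_sub_add {f g : ℝ → ℝ} (hf : Continuous f) (hg : Continuous g)
    (a x y : ℝ) :
    (∫ t in a..x, f t) - (∫ t in a..y, f t) - (∫ t in a..x, g t) + (∫ t in a..y, g t)
      = ∫ t in y..x, (f t - g t) := by
  rw [intervalIntegral.integral_sub (hf.intervalIntegrable y x) (hg.intervalIntegrable y x),
    ← intervalIntegral.integral_interval_sub_left (hf.intervalIntegrable a x)
      (hf.intervalIntegrable a y),
    ← intervalIntegral.integral_interval_sub_left (hg.intervalIntegrable a x)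
      (hg.intervalIntegrable a y)]
  ring

lemma Real.sqrt_add_sub_sqrt_le {a h : ℝ} (ha : 0 < a) (hh : 0 ≤ h) :
    √(a + h) - √a ≤ h / (2 * √a) := by
  have hmono : √a ≤ √(a + h) := sqrt_le_sqrt (by linarith)
  have hprod : (√(a + h) - √a) * (√(a + h) + √a) = h := by
    rw [mul_comm, ← sq_sub_sq, sq_sqrt (by linarith), sq_sqrt ha.le]
    ring
  rw [le_div_iff₀ (by positivity)]
  calc (√(a + h) - √a) * (2 * √a) ≤ (√(a + h) - √a) * (√(a + h) + √a) :=
        mul_le_mul_of_nonneg_left (by linarith) (by linarith)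
    _ = h := hprod

lemma Real.abs_sqrt_add_two_sub_sub_sqrt_sub_le {r t : ℝ} (hr : 0 < r) (ht : |t| ≤ √r / 2) :
    |√(r + 2 - t ^ 2) - √(r - t ^ 2)| ≤ 2 / √r := by
  have ht2 : t ^ 2 ≤ r / 4 := by
    calc t ^ 2 = |t| ^ 2 := (sq_abs t).symm
      _ ≤ (√r / 2) ^ 2 := pow_le_pow_left₀ (abs_nonneg t) ht 2
      _ = r / 4 := by rw [div_pow, sq_sqrt hr.le]; norm_num
  have ha : 0 < r - t ^ 2 := by linarith
  have hroot : √r / 2 ≤ √(r - t ^ 2) := by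
    rw [le_sqrt (by positivity) ha.le, div_pow, sq_sqrt hr.le]
    linarith
  have hshift : r + 2 - t ^ 2 = (r - t ^ 2) + 2 := by ring
  rw [hshift, abs_of_nonneg (sub_nonneg.mpr (sqrt_le_sqrt (by linarith)))]
  calc √((r - t ^ 2) + 2) - √(r - t ^ 2) ≤ 2 / (2 * √(r - t ^ 2)) :=
        sqrt_add_sub_sqrt_le ha zero_le_two
    _ ≤ 2 / (2 * (√r / 2)) := by gcongr
    _ = 2 / √r := by ring

theorem stmt6_general (n : ℕ)
    (φ : ℕ → ℝ → ℝ)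
    (hφ : ∀ (m : ℕ) (x : ℝ), φ m x = ∫ t in (0:ℝ)..x, Real.sqrt (2 * (m : ℝ) + 1 - t ^ 2))
    (T x y : ℝ) (hT' : T ≤ Real.sqrt (2 * (n : ℝ) + 1) / 2)
    (hx : |x| ≤ T) (hy : |y| ≤ T) :
    |φ (n + 1) x - φ (n + 1) y - φ n x + φ n y|
      ≤ 3 * |x - y| / Real.sqrt (2 * (n : ℝ) + 1) := by
  set r : ℝ := 2 * n + 1
  have hr : 0 < r := by positivity
  have hcont : ∀ c : ℝ, Continuous fun t : ℝ => √(c - t ^ 2) := fun c => by fun_prop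
  have hrepr : φ (n + 1) x - φ (n + 1) y - φ n x + φ n y
      = ∫ t in y..x, (√(r + 2 - t ^ 2) - √(r - t ^ 2)) := by
    simp only [hφ, Nat.cast_add_one, show 2 * ((n : ℝ) + 1) + 1 = r + 2 by ring]
    exact intervalIntegral_sub_sub_sub_add (hcont _) (hcont _) 0 x y
  have hpointwise : ∀ t ∈ Set.uIoc y x, ‖√(r + 2 - t ^ 2) - √(r - t ^ 2)‖ ≤ 2 / √r := by
    intro t ht
    have htT : |t| ≤ T := by
      rcases Set.mem_uIcc.mp (Set.uIoc_subset_uIcc ht) with ⟨h₁, h₂⟩ | ⟨h₁, h₂⟩ <;>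
        exact abs_le.mpr ⟨by linarith [(abs_le.mp hx).1, (abs_le.mp hy).1],
          by linarith [(abs_le.mp hx).2, (abs_le.mp hy).2]⟩
    exact abs_sqrt_add_two_sub_sub_sqrt_sub_le hr (htT.trans hT')
  rw [hrepr, ← Real.norm_eq_abs]
  calc _ ≤ 2 / √r * |x - y| := intervalIntegral.norm_integral_le_of_norm_le_const hpointwise
    _ ≤ 3 * |x - y| / √r := by
      rw [div_mul_eq_mul_div]
      gcongr
      norm_num

/-- For `φ_n(x) = ∫₀ˣ √(2n+1 - t²) dt` and `|x|, |y| ≤ T ≤ √(2n+1)/2`: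
`|φ_{n+1}(x) - φ_{n+1}(y) - φ_n(x) + φ_n(y)| ≤ 3|x - y|/√(2n+1)`. -/
theorem stmt6 (n : ℕ)
    (φ : ℕ → ℝ → ℝ)
    (hφ : ∀ (m : ℕ) (x : ℝ), φ m x = ∫ t in (0:ℝ)..x, Real.sqrt (2 * (m : ℝ) + 1 - t ^ 2))
    (T x y : ℝ) (hT : 0 < T) (hT' : T ≤ Real.sqrt (2 * (n : ℝ) + 1) / 2)
    (hx : |x| ≤ T) (hy : |y| ≤ T) :
    |φ (n + 1) x - φ (n + 1) y - φ n x + φ n y|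
      ≤ 3 * |x - y| / Real.sqrt (2 * (n : ℝ) + 1) :=
  stmt6_general n φ hφ T x y hT' hx hy
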